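/- Fourier-domain stencil criteria: let M : (ZMod 2d)² → ℂ be a stencil, M̄ := P M its projection, and N := P(F M) the projection of its symplectic discrete Fourier transform. Then M̄ satisfies (M1) M̄ is real-valued, (M2) Σ_m M̄(m) = 1, and (M3) (M̄ ⋆ M̄)(2α) = 1 if α = 0 and 0 otherwise for all α ∈ (ZMod d)², if and only if N satisfies (M̌1) conj(N(m)) = N(−m) for all m, (M̌2) N(0) = 1/(2d), and (M̌3) |N(m)| = 1/(2d) for all m ∈ (ZMod 2d)². -/

import Mathlib

open scoped BigOperators
open Matrix

noncomputable section

/-- `omega n a = exp(2πi a / n)`, the `n`-th roots of unity raised to integer power `a`. -/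
def omega (n : ℕ) (a : ℤ) : ℂ := Complex.exp (2 * Real.pi * Complex.I * a / n)

/-- `Zpow d k = Σ_j ω_d^(k·j) |j⟩⟨j|`, the `k`-th power of the clock operator. -/
def Zpow (d : ℕ) (k : ℤ) : Matrix (ZMod d) (ZMod d) ℂ :=
  Matrix.of fun i j => if i = j then omega d (k * (j.val : ℤ)) else 0

/-- `Xpow d k = Σ_j |j+k⟩⟨j|`, the `k`-th power of the shift operator. -/
def Xpow (d : ℕ) (k : ℤ) : Matrix (ZMod d) (ZMod d) ℂ :=
  Matrix.of fun i j => if i = j + (k : ZMod d) then 1 else 0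

/-- The Weyl–Heisenberg displacement operator `V(k) = ω_{2d}^{-k₁k₂} Z^{k₂} X^{k₁}` for `k ∈ ℤ²`. -/
def Vint (d : ℕ) [NeZero d] (k : ℤ × ℤ) : Matrix (ZMod d) (ZMod d) ℂ :=
  omega (2 * d) (-(k.1 * k.2)) • (Zpow d k.2 * Xpow d k.1)

/-- The WHDO on the doubled phase space `(ZMod (2d))²`. -/
def V (d : ℕ) [NeZero d] (m : ZMod (2 * d) × ZMod (2 * d)) : Matrix (ZMod d) (ZMod d) ℂ :=
  Vint d ((m.1.val : ℤ), (m.2.val : ℤ))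

/-- Discrete parity operator `R = Σ_j |-j⟩⟨j|`. -/
def R (d : ℕ) : Matrix (ZMod d) (ZMod d) ℂ :=
  Matrix.of fun i j => if i = -j then 1 else 0

/-- Doubled phase-point operator `A(m) = V(m)·R`. -/
def A (d : ℕ) [NeZero d] (m : ZMod (2 * d) × ZMod (2 * d)) : Matrix (ZMod d) (ZMod d) ℂ :=
  V d m * R d

variable (d : ℕ) [NeZero d]

/-- Doubled Wigner transform: `Wig[O](m) = (1/(2d)) Tr(A(m)† O)`. -/
def Wig (O : Matrix (ZMod d) (ZMod d) ℂ) (m : ZMod (2 * d) × ZMod (2 * d)) : ℂ :=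
  (1 / (2 * (d : ℂ))) * ((A d m)ᴴ * O).trace

/-- Doubled Weyl transform: `Op[f] = (1/2) Σ_m f(m) A(m)`. -/
def OpW (f : ZMod (2 * d) × ZMod (2 * d) → ℂ) : Matrix (ZMod d) (ZMod d) ℂ :=
  (1 / 2 : ℂ) • ∑ m : ZMod (2 * d) × ZMod (2 * d), f m • A d m

/-- The projector `P = Wig ∘ Op` on functions on the doubled phase space. -/
def P (f : ZMod (2 * d) × ZMod (2 * d) → ℂ) : ZMod (2 * d) × ZMod (2 * d) → ℂ :=
  Wig d (OpW d f)

/-- Inner product on functions on the doubled phase space. -/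
def ip (f g : ZMod (2 * d) × ZMod (2 * d) → ℂ) : ℂ :=
  ∑ m : ZMod (2 * d) × ZMod (2 * d), (starRingEnd ℂ) (f m) * g m

/-- Cross-correlation `(f ⋆ g)(m) = Σ_{m'} conj(f m') g(m'+m)`. -/
def crossCor (f g : ZMod (2 * d) × ZMod (2 * d) → ℂ) (m : ZMod (2 * d) × ZMod (2 * d)) : ℂ :=
  ∑ m' : ZMod (2 * d) × ZMod (2 * d), (starRingEnd ℂ) (f m') * g (m' + m)

/-- The doubling map `ZMod d → ZMod (2d)`, `a ↦ 2a`. -/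
def dbl (a : ZMod d) : ZMod (2 * d) := ((2 * a.val : ℕ) : ZMod (2 * d))

/-- The doubling map on the phase space. -/
def dbl2 (α : ZMod d × ZMod d) : ZMod (2 * d) × ZMod (2 * d) := (dbl d α.1, dbl d α.2)

/-- A stencil `M` is valid if its projection `M̄ = P M` is real-valued (M1),
sums to 1 (M2), and satisfies the autocorrelation condition (M3). -/
def IsValidStencil (M : ZMod (2 * d) × ZMod (2 * d) → ℂ) : Prop :=
  (∀ m, (starRingEnd ℂ) (P d M m) = P d M m) ∧
  (∑ m : ZMod (2 * d) × ZMod (2 * d), P d M m) = 1 ∧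
  (∀ α : ZMod d × ZMod d,
    crossCor d (P d M) (P d M) (dbl2 d α) = if α = 0 then 1 else 0)

/-- The `M`-PPO frame generated by a stencil `M`:
`A^M(α) = (1/2) Σ_{m'} M(m') A(m' + 2α)`. -/
def AM (M : ZMod (2 * d) × ZMod (2 * d) → ℂ) (α : ZMod d × ZMod d) :
    Matrix (ZMod d) (ZMod d) ℂ :=
  (1 / 2 : ℂ) • ∑ m' : ZMod (2 * d) × ZMod (2 * d), M m' • A d (m' + dbl2 d α)

/-- A family of phase-point operators on `(ZMod d)²` is a valid PPO frame if it is
Hermitian (A1), trace-1 (A2), orthogonal (A3), and WHDO-covariant (A4). -/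
def IsValidPPOFrame (B : ZMod d × ZMod d → Matrix (ZMod d) (ZMod d) ℂ) : Prop :=
  (∀ α, (B α)ᴴ = B α) ∧
  (∀ α, (B α).trace = 1) ∧
  (∀ α β, ((B α)ᴴ * B β).trace = if α = β then (d : ℂ) else 0) ∧
  (∀ (k : ℤ × ℤ) (α : ZMod d × ZMod d),
    Vint d k * B α * (Vint d k)ᴴ = B (α + ((k.1 : ZMod d), (k.2 : ZMod d))))

/-- The `M`-Wigner transform: `Wig^M[O](α) = (1/d) Tr(A^M(α)† O)`. -/
def WigM (M : ZMod (2 * d) × ZMod (2 * d) → ℂ) (O : Matrix (ZMod d) (ZMod d) ℂ)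
    (α : ZMod d × ZMod d) : ℂ :=
  (1 / (d : ℂ)) * ((AM d M α)ᴴ * O).trace

/-- The `M`-Weyl transform: `Op^M[f] = Σ_α f(α) A^M(α)`. -/
def OpM (M : ZMod (2 * d) × ZMod (2 * d) → ℂ) (f : ZMod d × ZMod d → ℂ) :
    Matrix (ZMod d) (ZMod d) ℂ :=
  ∑ α : ZMod d × ZMod d, f α • AM d M α

/-- The symplectic discrete Fourier transform. -/
def SDFT (f : ZMod (2 * d) × ZMod (2 * d) → ℂ) (m : ZMod (2 * d) × ZMod (2 * d)) : ℂ :=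
  (1 / (2 * (d : ℂ))) * ∑ m' : ZMod (2 * d) × ZMod (2 * d),
    omega (2 * d) (-((m.1.val : ℤ) * (m'.2.val : ℤ) - (m.2.val : ℤ) * (m'.1.val : ℤ))) * f m'


/-- Coarse-grain-stencil PPO frame: `B(α) = (1/2) Σ_{b∈{0,1}²} A(2α + b)`. -/
def Bcgs (α : ZMod d × ZMod d) : Matrix (ZMod d) (ZMod d) ℂ :=
  (1 / 2 : ℂ) • ∑ b : ZMod 2 × ZMod 2,
    A d (dbl d α.1 + (b.1.val : ZMod (2 * d)), dbl d α.2 + (b.2.val : ZMod (2 * d)))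

/-- Momentum basis state `|p⟩ = (1/√d) Σ_j ω_d^{p j} |j⟩`. -/
def pvec (p : ZMod d) : ZMod d → ℂ :=
  fun j => (1 / ((Real.sqrt d : ℝ) : ℂ)) * omega d ((p.val : ℤ) * (j.val : ℤ))

/-- One-dimensional Dirichlet kernel `K(m) = (1/d) Σ_{t=-(d-1)/2}^{(d-1)/2} ω_{2d}^{t m}`. -/
def Kdir (m : ZMod (2 * d)) : ℂ :=
  (1 / (d : ℂ)) * ∑ t ∈ Finset.Icc (-(((d : ℤ) - 1) / 2)) (((d : ℤ) - 1) / 2),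
    omega (2 * d) (t * (m.val : ℤ))

end

section AuxOmega

lemma omega_add (n : ℕ) (a b : ℤ) : omega n (a + b) = omega n a * omega n b := by
  simp only [omega, ← Complex.exp_add]
  congr 1
  push_cast
  ring

lemma omega_zero (n : ℕ) : omega n 0 = 1 := by simp [omega]

lemma omega_conj (n : ℕ) (a : ℤ) :
    (starRingEnd ℂ) (omega n a) = omega n (-a) := by
  rw [omega, omega, ← Complex.exp_conj]
  congr 1
  simp only [map_div₀, _root_.map_mul, map_ofNat, Complex.conj_ofReal, Complex.conj_I,
    map_intCast, map_natCast]
  push_cast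
  ring

lemma omega_int_mul (n : ℕ) (hn : n ≠ 0) (k : ℤ) : omega n ((n : ℤ) * k) = 1 := by
  rw [omega]
  have hn' : (n : ℂ) ≠ 0 := Nat.cast_ne_zero.mpr hn
  have : (2 * (Real.pi : ℂ) * Complex.I * ((n : ℤ) * k : ℤ) / n : ℂ)
      = (k : ℂ) * (2 * (Real.pi : ℂ) * Complex.I) := by
    push_cast
    field_simp
  rw [this]
  exact Complex.exp_int_mul_two_pi_mul_I k

lemma omega_congr {n : ℕ} (hn : n ≠ 0) {a b : ℤ} (h : (n : ℤ) ∣ a - b) :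
    omega n a = omega n b := by
  obtain ⟨k, hk⟩ := h
  have : a = b + (n : ℤ) * k := by linarith
  rw [this, omega_add, omega_int_mul n hn, mul_one]

lemma omega_pow (n : ℕ) (a : ℤ) (j : ℕ) : omega n a ^ j = omega n (a * j) := by
  induction j with
  | zero => simp [omega_zero]
  | succ j ih =>
    rw [pow_succ, ih, ← omega_add]
    congr 1
    push_cast
    ring

lemma omega_eq_one_iff {n : ℕ} (hn : n ≠ 0) {a : ℤ} : omega n a = 1 ↔ (n : ℤ) ∣ a := by
  have hn' : (n : ℂ) ≠ 0 := Nat.cast_ne_zero.mpr hn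
  constructor
  · intro h
    rw [omega, Complex.exp_eq_one_iff] at h
    obtain ⟨k, hk⟩ := h
    have h2 : (2 : ℂ) * Real.pi * Complex.I ≠ 0 := by
      simp [Real.pi_ne_zero, Complex.I_ne_zero]
    have hc : (a : ℂ) = ((n * k : ℤ) : ℂ) := by
      apply mul_left_cancel₀ h2
      push_cast
      rw [show (2:ℂ) * Real.pi * Complex.I * ((n:ℂ) * k) = (k:ℂ) * (2 * Real.pi * Complex.I) * n
        by ring]
      field_simp at hk
      linear_combination (2 * (Real.pi : ℂ) * Complex.I) * hk
    exact ⟨k, by exact_mod_cast hc⟩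
  · rintro ⟨k, rfl⟩
    exact omega_int_mul n hn k

lemma sum_omega (n : ℕ) [NeZero n] (a : ℤ) :
    ∑ j : ZMod n, omega n (a * (j.val : ℤ)) = if (n : ℤ) ∣ a then (n : ℂ) else 0 := by
  have hn : n ≠ 0 := NeZero.ne n
  have hre : ∑ j : ZMod n, omega n (a * (j.val : ℤ))
      = ∑ j ∈ Finset.range n, omega n a ^ j := by
    refine Finset.sum_nbij' (fun j => j.val) (fun j => (j : ZMod n)) ?_ ?_ ?_ ?_ ?_
    · intro j _; exact Finset.mem_range.mpr (ZMod.val_lt j)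
    · intro j _; exact Finset.mem_univ _
    · intro j _; simp [ZMod.natCast_val, ZMod.cast_id]
    · intro j hj; exact ZMod.val_cast_of_lt (Finset.mem_range.mp hj)
    · intro j _; rw [omega_pow]
  rw [hre]
  by_cases h : (n : ℤ) ∣ a
  · simp [(omega_eq_one_iff hn).mpr h, h]
  · have hz : omega n a ≠ 1 := fun hc => h ((omega_eq_one_iff hn).mp hc)
    have hpow : omega n a ^ n = 1 := by
      rw [omega_pow]
      exact (omega_congr hn ⟨a, by ring⟩).trans (omega_zero n)
    rw [geom_sum_eq hz n, hpow]
    simp [h]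

end AuxOmega
section AuxE2
variable (d : ℕ) [NeZero d]

instance : NeZero (2 * d) := ⟨by have := NeZero.ne d; omega⟩

lemma h2dC : (2 * (d : ℂ)) ≠ 0 := by
  have := NeZero.ne d
  simp [this]

/-- Character on `ZMod (2d)`. -/
noncomputable def e2 (x : ZMod (2 * d)) : ℂ := omega (2 * d) (x.val : ℤ)

lemma e2_int (a : ℤ) : e2 d ((a : ZMod (2 * d))) = omega (2 * d) a := by
  apply omega_congr (NeZero.ne (2 * d))
  have h : ((((a : ZMod (2*d)).val : ℤ) - a : ℤ) : ZMod (2*d)) = 0 := by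
    push_cast
    simp [ZMod.intCast_cast, ZMod.natCast_val, ZMod.cast_id]
  exact (ZMod.intCast_zmod_eq_zero_iff_dvd _ _).mp h

lemma zmod_self_cast (x : ZMod (2 * d)) : (((x.val : ℤ)) : ZMod (2 * d)) = x := by
  push_cast
  simp [ZMod.natCast_val, ZMod.cast_id]

lemma e2_add (x y : ZMod (2 * d)) : e2 d (x + y) = e2 d x * e2 d y := by
  have : x + y = (((x.val : ℤ) + (y.val : ℤ) : ℤ) : ZMod (2 * d)) := by
    push_cast
    simp [ZMod.natCast_val, ZMod.cast_id]
  rw [this, e2_int, omega_add]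
  rfl

lemma e2_zero : e2 d 0 = 1 := by
  simp [e2, ZMod.val_zero, omega_zero]

lemma e2_conj (x : ZMod (2 * d)) : (starRingEnd ℂ) (e2 d x) = e2 d (-x) := by
  rw [e2, omega_conj]
  rw [show -x = (((-(x.val : ℤ)) : ℤ) : ZMod (2 * d)) by
    push_cast; simp [ZMod.natCast_val, ZMod.cast_id], e2_int]

lemma e2_mul_conj (x : ZMod (2 * d)) : (starRingEnd ℂ) (e2 d x) * e2 d x = 1 := by
  rw [e2_conj, ← e2_add]
  simp [e2_zero]

lemma e2_mul_int (a b : ℤ) :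
    e2 d ((a : ZMod (2*d)) * (b : ZMod (2*d))) = omega (2 * d) (a * b) := by
  rw [show ((a : ZMod (2*d)) * (b : ZMod (2*d))) = ((a * b : ℤ) : ZMod (2*d)) by push_cast; ring,
    e2_int]

lemma omega_two_mul (z : ℤ) : omega (2 * d) (2 * z) = omega d z := by
  have hd : (d : ℂ) ≠ 0 := Nat.cast_ne_zero.mpr (NeZero.ne d)
  rw [omega, omega]
  congr 1
  push_cast
  field_simp

lemma sum_e2_mul (x : ZMod (2 * d)) :
    ∑ b : ZMod (2 * d), e2 d (x * b) = if x = 0 then (2 * (d : ℂ)) else 0 := by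
  have : ∀ b : ZMod (2 * d), e2 d (x * b) = omega (2 * d) ((x.val : ℤ) * (b.val : ℤ)) := by
    intro b
    rw [← e2_mul_int, zmod_self_cast, zmod_self_cast]
  simp_rw [this]
  rw [sum_omega (2 * d) (x.val : ℤ)]
  by_cases hx : x = 0
  · simp [hx, ZMod.val_zero]
  · have h1 : ¬ ((((2 * d : ℕ)) : ℤ) ∣ (x.val : ℤ)) := by
      intro hdvd
      have h2 : (2 * d : ℕ) ∣ x.val := by exact_mod_cast hdvd
      have h3 : x.val = 0 := Nat.eq_zero_of_dvd_of_lt h2 (ZMod.val_lt x)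
      exact hx ((ZMod.val_eq_zero x).mp h3)
    rw [if_neg h1, if_neg hx]
end AuxE2
section AuxZMod
variable (d : ℕ) [NeZero d]

lemma negD : -((d : ℕ) : ZMod (2 * d)) = ((d : ℕ) : ZMod (2 * d)) := by
  have h : ((d : ℕ) : ZMod (2*d)) + ((d : ℕ) : ZMod (2*d)) = 0 := by
    have : (((2 * d : ℕ)) : ZMod (2 * d)) = 0 := ZMod.natCast_self _
    push_cast at this
    linear_combination this
  linear_combination -h

lemma D_ne_zero : ((d : ℕ) : ZMod (2 * d)) ≠ 0 := by
  intro h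
  have hd := NeZero.ne d
  have : ((d : ℕ) : ZMod (2*d)).val = d := ZMod.val_cast_of_lt (by omega)
  rw [h, ZMod.val_zero] at this
  omega

lemma twoD : (2 : ZMod (2 * d)) * ((d : ℕ) : ZMod (2 * d)) = 0 := by
  have : (((2 * d : ℕ)) : ZMod (2 * d)) = 0 := ZMod.natCast_self _
  push_cast at this
  linear_combination this

lemma val_dvd_iff (y : ZMod (2 * d)) :
    d ∣ y.val ↔ (y = 0 ∨ y = ((d : ℕ) : ZMod (2 * d))) := by
  have hd := NeZero.ne d
  constructor
  · rintro ⟨c, hc⟩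
    have hlt := ZMod.val_lt y
    have hc2 : c < 2 := by nlinarith
    have hy : y = ((y.val : ℕ) : ZMod (2 * d)) := by
      simp [ZMod.natCast_val, ZMod.cast_id]
    interval_cases c
    · left; rw [hy]; simp [hc]
    · right; rw [hy]; rw [hc]; simp
  · rintro (rfl | rfl)
    · simp
    · rw [ZMod.val_cast_of_lt (by omega)]

lemma sub_cond (x y : ZMod (2 * d)) :
    ((x.val : ZMod d) = (y.val : ZMod d)) ↔ (x = y ∨ x = y + ((d : ℕ) : ZMod (2 * d))) := by
  have key : ∀ z : ZMod (2 * d), ((z.val : ZMod d) = 0) ↔ (z = 0 ∨ z = ((d:ℕ) : ZMod (2*d))) := by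
    intro z
    rw [ZMod.natCast_eq_zero_iff]
    exact val_dvd_iff d z
  have hcast : ∀ z : ZMod (2 * d), ((z.val : ZMod d)) =
      (ZMod.castHom (dvd_mul_left d 2) (ZMod d)) z := by
    intro z
    simp [ZMod.natCast_val]
  rw [hcast, hcast]
  constructor
  · intro h
    have h2 : (ZMod.castHom (dvd_mul_left d 2) (ZMod d)) (x - y) = 0 := by
      rw [map_sub, h, sub_self]
    rw [← hcast, key] at h2
    rcases h2 with h2 | h2
    · left; linear_combination h2
    · right; linear_combination h2
  · rintro (rfl | rfl)
    · rfl
    · rw [map_add, map_natCast]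
      simp [ZMod.natCast_self]

lemma dbl_eq_zero_iff (a : ZMod d) : dbl d a = 0 ↔ a = 0 := by
  have hd := NeZero.ne d
  rw [dbl, ZMod.natCast_eq_zero_iff]
  constructor
  · intro h
    have hlt := ZMod.val_lt a
    have : 2 * a.val < 2 * d := by omega
    have hz : 2 * a.val = 0 := Nat.eq_zero_of_dvd_of_lt h this
    have : a.val = 0 := by omega
    exact (ZMod.val_eq_zero a).mp this
  · rintro rfl; simp

lemma dbl_val (a : ZMod d) : (dbl d a).val = 2 * a.val := by
  rw [dbl, ZMod.val_cast_of_lt]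
  have := ZMod.val_lt a
  omega

lemma sum_e2_dbl (y : ZMod (2 * d)) :
    ∑ a : ZMod d, e2 d (dbl d a * y)
      = if (y = 0 ∨ y = ((d : ℕ) : ZMod (2 * d))) then (d : ℂ) else 0 := by
  have hstep : ∀ a : ZMod d, e2 d (dbl d a * y) = omega d ((y.val : ℤ) * (a.val : ℤ)) := by
    intro a
    rw [show dbl d a * y = ((((dbl d a).val : ℤ) * (y.val : ℤ) : ℤ) : ZMod (2*d)) by
      push_cast; simp [ZMod.natCast_val, ZMod.cast_id], e2_int]
    rw [dbl_val]
    rw [show (((2 * a.val : ℕ) : ℤ) * (y.val : ℤ)) = 2 * ((y.val : ℤ) * (a.val : ℤ)) by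
      push_cast; ring]
    exact omega_two_mul d _
  simp_rw [hstep]
  rw [sum_omega d (y.val : ℤ)]
  by_cases hy : (y = 0 ∨ y = ((d : ℕ) : ZMod (2 * d)))
  · rw [if_pos (Int.natCast_dvd_natCast.mpr ((val_dvd_iff d y).mpr hy)), if_pos hy]
  · rw [if_neg (fun h => hy ((val_dvd_iff d y).mp (Int.natCast_dvd_natCast.mp h))), if_neg hy]
end AuxZMod
section AuxCls
variable (d : ℕ) [NeZero d]

/-- the class condition: congruent mod d in both coordinates -/
def cond4 (x y : ZMod (2 * d) × ZMod (2 * d)) : Prop :=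
  (x.1 = y.1 ∨ x.1 = y.1 + ((d : ℕ) : ZMod (2 * d))) ∧
  (x.2 = y.2 ∨ x.2 = y.2 + ((d : ℕ) : ZMod (2 * d)))

instance (x y : ZMod (2 * d) × ZMod (2 * d)) : Decidable (cond4 d x y) := by
  unfold cond4; infer_instance

lemma if_or_split {α : Type*} [DecidableEq α] (a a' : α) (h : a ≠ a') (v : α → ℂ) :
    ∀ x, (if (x = a ∨ x = a') then v x else 0)
      = (if x = a then v x else 0) + (if x = a' then v x else 0) := by
  intro x
  by_cases h1 : x = a <;> by_cases h2 : x = a' <;> simp_all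

lemma self_ne_add_D (a : ZMod (2 * d)) : a ≠ a + ((d : ℕ) : ZMod (2 * d)) := by
  intro h
  exact D_ne_zero d (by linear_combination -h)

lemma sum_or (a : ZMod (2 * d)) (v : ZMod (2 * d) → ℂ) :
    ∑ x : ZMod (2 * d), (if (x = a ∨ x = a + ((d:ℕ) : ZMod (2*d))) then v x else 0)
      = v a + v (a + ((d:ℕ) : ZMod (2*d))) := by
  rw [Finset.sum_congr rfl
    (fun x _ => if_or_split a (a + ((d:ℕ):ZMod (2*d))) (self_ne_add_D d a) v x)]
  rw [Finset.sum_add_distrib]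
  simp [Finset.sum_ite_eq']

lemma sum_cond4 (g : ZMod (2 * d) × ZMod (2 * d) → ℂ) (y : ZMod (2 * d) × ZMod (2 * d)) :
    ∑ x : ZMod (2 * d) × ZMod (2 * d), (if cond4 d x y then g x else 0)
      = g y + g (y.1 + ((d:ℕ) : ZMod (2*d)), y.2) + g (y.1, y.2 + ((d:ℕ) : ZMod (2*d)))
        + g (y.1 + ((d:ℕ) : ZMod (2*d)), y.2 + ((d:ℕ) : ZMod (2*d))) := by
  rw [Fintype.sum_prod_type]
  simp only [cond4, ite_and]
  have swap_if : ∀ (P : Prop) (_ : Decidable P) (A : ZMod (2*d) → ℂ),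
      (∑ x2 : ZMod (2*d), if P then A x2 else 0) = if P then (∑ x2 : ZMod (2*d), A x2) else 0 := by
    intro P _ A
    split <;> simp
  calc ∑ x1 : ZMod (2*d), ∑ x2 : ZMod (2*d),
        (if (x1 = y.1 ∨ x1 = y.1 + ((d:ℕ):ZMod (2*d))) then
          (if (x2 = y.2 ∨ x2 = y.2 + ((d:ℕ):ZMod (2*d))) then g (x1, x2) else 0) else 0)
      = ∑ x1 : ZMod (2*d),
        (if (x1 = y.1 ∨ x1 = y.1 + ((d:ℕ):ZMod (2*d))) then
          (g (x1, y.2) + g (x1, y.2 + ((d:ℕ):ZMod (2*d)))) else 0) := by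
        apply Finset.sum_congr rfl
        intro x1 _
        rw [swap_if _ _ (fun x2 => if (x2 = y.2 ∨ x2 = y.2 + ((d:ℕ):ZMod (2*d))) then g (x1, x2) else 0)]
        rw [sum_or d y.2 (fun x2 => g (x1, x2))]
    _ = _ := by
        rw [sum_or d y.1 (fun x1 => g (x1, y.2) + g (x1, y.2 + ((d:ℕ):ZMod (2*d))))]
        have : (y.1, y.2) = y := rfl
        rw [this]
        ring

lemma sum_e2_pair (c : ZMod (2 * d) × ZMod (2 * d)) :
    ∑ k : ZMod (2 * d) × ZMod (2 * d), e2 d (c.1 * k.2 - c.2 * k.1)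
      = if c = 0 then (2 * (d : ℂ))^2 else 0 := by
  rw [Fintype.sum_prod_type]
  have hsplit : ∀ k1 k2 : ZMod (2*d), e2 d (c.1 * k2 - c.2 * k1)
      = e2 d ((-c.2) * k1) * e2 d (c.1 * k2) := by
    intro k1 k2
    rw [← e2_add]
    congr 1
    ring
  simp_rw [hsplit]
  rw [← Finset.sum_mul_sum]
  rw [sum_e2_mul, sum_e2_mul]
  by_cases h1 : c.1 = 0 <;> by_cases h2 : c.2 = 0 <;>
    simp [Prod.ext_iff, h1, h2, neg_eq_zero] <;> ring

end AuxCls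
section AuxMat
variable (d : ℕ) [NeZero d]

lemma A_apply (m : ZMod (2 * d) × ZMod (2 * d)) (i j : ZMod d) :
    A d m i j = if i = ((m.1.val : ℤ) : ZMod d) - j
      then omega (2 * d) (2 * (m.2.val : ℤ) * (i.val : ℤ) - (m.1.val : ℤ) * (m.2.val : ℤ))
      else 0 := by
  have hZX : ∀ k : ZMod d, (Zpow d (m.2.val : ℤ) * Xpow d (m.1.val : ℤ)) i k
      = if i = k + ((m.1.val : ℤ) : ZMod d) then omega d ((m.2.val : ℤ) * (i.val : ℤ)) else 0 := by
    intro k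
    rw [Matrix.mul_apply]
    simp only [Zpow, Xpow, Matrix.of_apply]
    simp only [ite_mul, zero_mul]
    rw [Finset.sum_ite_eq Finset.univ i
      (fun l => omega d ((m.2.val:ℤ) * (l.val:ℤ)) * (if l = k + ((m.1.val:ℤ) : ZMod d) then 1 else 0))]
    simp only [Finset.mem_univ, if_true]
    split <;> simp
  rw [A, V, Vint, Matrix.mul_apply]
  simp only [Matrix.smul_apply, smul_eq_mul, R, Matrix.of_apply]
  simp only [mul_ite, mul_one, mul_zero, ite_mul, zero_mul]
  rw [Finset.sum_ite_eq' Finset.univ (-j)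
    (fun k => omega (2*d) (-((m.1.val:ℤ) * (m.2.val:ℤ)))
      * (Zpow d (m.2.val:ℤ) * Xpow d (m.1.val:ℤ)) i k)]
  simp only [Finset.mem_univ, if_true]
  rw [hZX (-j)]
  rw [neg_add_eq_sub]
  split
  · rw [← omega_two_mul d ((m.2.val:ℤ) * (i.val:ℤ)), ← omega_add]
    congr 1
    ring
  · rw [mul_zero]

lemma cond1_iff (x y : ZMod (2 * d)) :
    (((x.val : ℤ) : ZMod d) = ((y.val : ℤ) : ZMod d))
      ↔ (x = y ∨ x = y + ((d:ℕ) : ZMod (2*d))) := by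
  rw [show ((x.val : ℤ) : ZMod d) = ((x.val : ℕ) : ZMod d) from by push_cast; rfl,
      show ((y.val : ℤ) : ZMod d) = ((y.val : ℕ) : ZMod d) from by push_cast; rfl]
  exact sub_cond d x y

lemma cond2_iff (x y : ZMod (2 * d)) :
    (((d:ℕ) : ℤ) ∣ (x.val : ℤ) - (y.val : ℤ)) ↔ (x = y ∨ x = y + ((d:ℕ) : ZMod (2*d))) := by
  rw [← ZMod.intCast_zmod_eq_zero_iff_dvd]
  rw [show (((x.val : ℤ) - (y.val : ℤ) : ℤ) : ZMod d) = ((x.val : ℕ) : ZMod d) - ((y.val : ℕ) : ZMod d) from by push_cast; ring]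
  rw [sub_eq_zero]
  rw [show ((x.val : ℕ) : ZMod d) = ((x.val : ℤ) : ZMod d) from by push_cast; rfl,
      show ((y.val : ℕ) : ZMod d) = ((y.val : ℤ) : ZMod d) from by push_cast; rfl]
  exact cond1_iff d x y

lemma trace_AA (m n : ZMod (2 * d) × ZMod (2 * d)) :
    ((A d m)ᴴ * A d n).trace
      = if cond4 d n m then (d : ℂ) * e2 d (m.1 * m.2 - n.1 * n.2) else 0 := by
  have hphase : omega (2*d) ((m.1.val:ℤ) * (m.2.val:ℤ) - (n.1.val:ℤ) * (n.2.val:ℤ))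
      = e2 d (m.1 * m.2 - n.1 * n.2) := by
    rw [show m.1 * m.2 - n.1 * n.2
        = ((((m.1.val:ℤ) * (m.2.val:ℤ) - (n.1.val:ℤ) * (n.2.val:ℤ)) : ℤ) : ZMod (2*d)) by
      push_cast
      simp [ZMod.natCast_val, ZMod.cast_id], e2_int]
  rw [Matrix.trace]
  have expand : ∀ i : ZMod d, ((A d m)ᴴ * A d n).diag i
      = ∑ j : ZMod d, (starRingEnd ℂ) (A d m j i) * A d n j i := by
    intro i
    rw [Matrix.diag, Matrix.mul_apply]
    apply Finset.sum_congr rfl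
    intro j _
    rw [Matrix.conjTranspose_apply]
    rfl
  simp_rw [expand]
  rw [Finset.sum_comm]
  have hterm : ∀ j i : ZMod d, (starRingEnd ℂ) (A d m j i) * A d n j i
      = if (j = ((m.1.val:ℤ) : ZMod d) - i) ∧ (j = ((n.1.val:ℤ) : ZMod d) - i) then
          omega (2*d) ((m.1.val:ℤ)*(m.2.val:ℤ) - (n.1.val:ℤ)*(n.2.val:ℤ))
            * omega (2*d) (2 * ((n.2.val:ℤ) - (m.2.val:ℤ)) * (j.val:ℤ))
        else 0 := by
    intro j i
    rw [A_apply, A_apply, apply_ite (starRingEnd ℂ), map_zero, omega_conj]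
    by_cases h1 : j = ((m.1.val:ℤ) : ZMod d) - i <;>
      by_cases h2 : j = ((n.1.val:ℤ) : ZMod d) - i
    · rw [if_pos h1, if_pos h2, if_pos ⟨h1, h2⟩, ← omega_add, ← omega_add]
      congr 1
      ring
    · rw [if_pos h1, if_neg h2, if_neg (by tauto), mul_zero]
    · rw [if_neg h1, if_pos h2, if_neg (by tauto), zero_mul]
    · rw [if_neg h1, if_neg h2, if_neg (by tauto), mul_zero]
  simp_rw [hterm]
  have hcond : ∀ j i : ZMod d,
      ((j = ((m.1.val:ℤ) : ZMod d) - i) ∧ (j = ((n.1.val:ℤ) : ZMod d) - i))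
        ↔ ((i = ((m.1.val:ℤ) : ZMod d) - j) ∧
            (((n.1.val:ℤ) : ZMod d) = ((m.1.val:ℤ) : ZMod d))) := by
    intro j i
    constructor
    · rintro ⟨h1, h2⟩
      exact ⟨by linear_combination h1, by linear_combination h1 - h2⟩
    · rintro ⟨h1, h2⟩
      exact ⟨by linear_combination h1, by linear_combination h1 - h2⟩
  simp_rw [hcond, ite_and]
  simp_rw [Finset.sum_ite_eq' Finset.univ]
  simp only [Finset.mem_univ, if_true]
  have hswap : ∀ (P : Prop) (_ : Decidable P) (A : ZMod d → ℂ),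
      (∑ j : ZMod d, if P then A j else 0) = if P then (∑ j : ZMod d, A j) else 0 := by
    intro P _ A
    split <;> simp
  rw [hswap]
  have hsum : ∑ j : ZMod d,
      omega (2*d) ((m.1.val:ℤ)*(m.2.val:ℤ) - (n.1.val:ℤ)*(n.2.val:ℤ))
        * omega (2*d) (2 * ((n.2.val:ℤ) - (m.2.val:ℤ)) * (j.val:ℤ))
      = e2 d (m.1 * m.2 - n.1 * n.2)
        * (if (((d:ℕ):ℤ) ∣ (n.2.val:ℤ) - (m.2.val:ℤ)) then (d:ℂ) else 0) := by
    rw [← Finset.mul_sum, hphase]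
    congr 1
    have : ∀ j : ZMod d, omega (2*d) (2 * ((n.2.val:ℤ) - (m.2.val:ℤ)) * (j.val:ℤ))
        = omega d (((n.2.val:ℤ) - (m.2.val:ℤ)) * (j.val:ℤ)) := by
      intro j
      rw [← omega_two_mul d (((n.2.val:ℤ) - (m.2.val:ℤ)) * (j.val:ℤ))]
      congr 1
      ring
    simp_rw [this]
    rw [sum_omega d]
  rw [hsum]
  by_cases hC1 : (n.1 = m.1 ∨ n.1 = m.1 + ((d:ℕ) : ZMod (2*d))) <;>
    by_cases hC2 : (n.2 = m.2 ∨ n.2 = m.2 + ((d:ℕ) : ZMod (2*d)))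
  · rw [if_pos ((cond1_iff d n.1 m.1).mpr hC1), if_pos ((cond2_iff d n.2 m.2).mpr hC2),
      if_pos ⟨hC1, hC2⟩]
    ring
  · rw [if_pos ((cond1_iff d n.1 m.1).mpr hC1),
      if_neg (fun h => hC2 ((cond2_iff d n.2 m.2).mp h)), if_neg (by exact fun h => hC2 h.2)]
    ring
  · rw [if_neg (fun h => hC1 ((cond1_iff d n.1 m.1).mp h)), if_neg (by exact fun h => hC1 h.1)]
  · rw [if_neg (fun h => hC1 ((cond1_iff d n.1 m.1).mp h)), if_neg (by exact fun h => hC1 h.1)]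
end AuxMat
section AuxP
variable (d : ℕ) [NeZero d]

lemma P_apply (f : ZMod (2 * d) × ZMod (2 * d) → ℂ) (m : ZMod (2 * d) × ZMod (2 * d)) :
    P d f m = (1/4 : ℂ) * ∑ x : ZMod (2 * d) × ZMod (2 * d),
      (if cond4 d x m then e2 d (m.1 * m.2 - x.1 * x.2) * f x else 0) := by
  have hd : (d : ℂ) ≠ 0 := Nat.cast_ne_zero.mpr (NeZero.ne d)
  rw [P, Wig, OpW, Matrix.mul_smul, Matrix.trace_smul, Matrix.mul_sum, Matrix.trace_sum]
  simp_rw [Matrix.mul_smul, Matrix.trace_smul, trace_AA]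
  simp only [smul_eq_mul, Finset.mul_sum]
  apply Finset.sum_congr rfl
  intro x _
  by_cases h : cond4 d x m
  · rw [if_pos h, if_pos h]
    field_simp
    ring
  · rw [if_neg h, if_neg h]
    simp

lemma P_apply4 (f : ZMod (2 * d) × ZMod (2 * d) → ℂ) (m : ZMod (2 * d) × ZMod (2 * d)) :
    P d f m = (1/4 : ℂ) * (f m
      + e2 d (-(((d:ℕ) : ZMod (2*d)) * m.2)) * f (m.1 + ((d:ℕ) : ZMod (2*d)), m.2)
      + e2 d (-(((d:ℕ) : ZMod (2*d)) * m.1)) * f (m.1, m.2 + ((d:ℕ) : ZMod (2*d)))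
      + e2 d (-(((d:ℕ) : ZMod (2*d)) * m.1 + ((d:ℕ) : ZMod (2*d)) * m.2
          + ((d:ℕ) : ZMod (2*d)) * ((d:ℕ) : ZMod (2*d))))
        * f (m.1 + ((d:ℕ) : ZMod (2*d)), m.2 + ((d:ℕ) : ZMod (2*d)))) := by
  rw [P_apply, sum_cond4 d (fun x => e2 d (m.1 * m.2 - x.1 * x.2) * f x) m]
  congr 1
  rw [show m.1 * m.2 - m.1 * m.2 = 0 from by ring, e2_zero, one_mul]
  rw [show m.1 * m.2 - ((m.1 + ((d:ℕ) : ZMod (2*d)), m.2) : ZMod (2*d) × ZMod (2*d)).1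
      * ((m.1 + ((d:ℕ) : ZMod (2*d)), m.2) : ZMod (2*d) × ZMod (2*d)).2
    = -(((d:ℕ) : ZMod (2*d)) * m.2) from by ring]
  rw [show m.1 * m.2 - ((m.1, m.2 + ((d:ℕ) : ZMod (2*d))) : ZMod (2*d) × ZMod (2*d)).1
      * ((m.1, m.2 + ((d:ℕ) : ZMod (2*d))) : ZMod (2*d) × ZMod (2*d)).2
    = -(((d:ℕ) : ZMod (2*d)) * m.1) from by ring]
  rw [show m.1 * m.2
      - ((m.1 + ((d:ℕ) : ZMod (2*d)), m.2 + ((d:ℕ) : ZMod (2*d))) : ZMod (2*d) × ZMod (2*d)).1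
      * ((m.1 + ((d:ℕ) : ZMod (2*d)), m.2 + ((d:ℕ) : ZMod (2*d))) : ZMod (2*d) × ZMod (2*d)).2
    = -(((d:ℕ) : ZMod (2*d)) * m.1 + ((d:ℕ) : ZMod (2*d)) * m.2
        + ((d:ℕ) : ZMod (2*d)) * ((d:ℕ) : ZMod (2*d))) from by ring]

lemma P_shift1 (f : ZMod (2 * d) × ZMod (2 * d) → ℂ) (m : ZMod (2 * d) × ZMod (2 * d)) :
    P d f (m.1 + ((d:ℕ) : ZMod (2*d)), m.2)
      = e2 d (((d:ℕ) : ZMod (2*d)) * m.2) * P d f m := by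
  rw [P_apply, P_apply]
  simp only [Finset.mul_sum]
  apply Finset.sum_congr rfl
  intro x _
  have hcondeq : cond4 d x ((m.1 + ((d:ℕ) : ZMod (2*d)), m.2)) ↔ cond4 d x m := by
    unfold cond4
    constructor
    · rintro ⟨h1 | h1, h2⟩
      · exact ⟨Or.inr h1, h2⟩
      · refine ⟨Or.inl ?_, h2⟩
        rw [h1]
        linear_combination twoD d
    · rintro ⟨h1 | h1, h2⟩
      · refine ⟨Or.inr ?_, h2⟩
        rw [h1]
        linear_combination -(twoD d)
      · exact ⟨Or.inl h1, h2⟩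
  by_cases h : cond4 d x m
  · rw [if_pos ((hcondeq).mpr h), if_pos h]
    rw [show ((m.1 + ((d:ℕ) : ZMod (2*d)), m.2) : ZMod (2*d) × ZMod (2*d)).1
        * ((m.1 + ((d:ℕ) : ZMod (2*d)), m.2) : ZMod (2*d) × ZMod (2*d)).2 - x.1 * x.2
      = (((d:ℕ) : ZMod (2*d)) * m.2) + (m.1 * m.2 - x.1 * x.2) from by ring, e2_add]
    ring
  · rw [if_neg ((fun hc => h (hcondeq.mp hc))), if_neg h]
    ring

lemma P_shift2 (f : ZMod (2 * d) × ZMod (2 * d) → ℂ) (m : ZMod (2 * d) × ZMod (2 * d)) :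
    P d f (m.1, m.2 + ((d:ℕ) : ZMod (2*d)))
      = e2 d (((d:ℕ) : ZMod (2*d)) * m.1) * P d f m := by
  rw [P_apply, P_apply]
  simp only [Finset.mul_sum]
  apply Finset.sum_congr rfl
  intro x _
  have hcondeq : cond4 d x ((m.1, m.2 + ((d:ℕ) : ZMod (2*d)))) ↔ cond4 d x m := by
    unfold cond4
    constructor
    · rintro ⟨h1, h2 | h2⟩
      · exact ⟨h1, Or.inr h2⟩
      · refine ⟨h1, Or.inl ?_⟩
        rw [h2]
        linear_combination twoD d
    · rintro ⟨h1, h2 | h2⟩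
      · refine ⟨h1, Or.inr ?_⟩
        rw [h2]
        linear_combination -(twoD d)
      · exact ⟨h1, Or.inl h2⟩
  by_cases h : cond4 d x m
  · rw [if_pos ((hcondeq).mpr h), if_pos h]
    rw [show ((m.1, m.2 + ((d:ℕ) : ZMod (2*d))) : ZMod (2*d) × ZMod (2*d)).1
        * ((m.1, m.2 + ((d:ℕ) : ZMod (2*d))) : ZMod (2*d) × ZMod (2*d)).2 - x.1 * x.2
      = (((d:ℕ) : ZMod (2*d)) * m.1) + (m.1 * m.2 - x.1 * x.2) from by ring, e2_add]
    ring
  · rw [if_neg ((fun hc => h (hcondeq.mp hc))), if_neg h]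
    ring

lemma SDFT_eq (f : ZMod (2 * d) × ZMod (2 * d) → ℂ) (m : ZMod (2 * d) × ZMod (2 * d)) :
    SDFT d f m = (1 / (2 * (d : ℂ))) * ∑ x : ZMod (2 * d) × ZMod (2 * d),
      e2 d (m.2 * x.1 - m.1 * x.2) * f x := by
  rw [SDFT]
  congr 1
  apply Finset.sum_congr rfl
  intro x _
  congr 1
  rw [show m.2 * x.1 - m.1 * x.2
      = (((-((m.1.val:ℤ) * (x.2.val:ℤ) - (m.2.val:ℤ) * (x.1.val:ℤ))) : ℤ) : ZMod (2*d)) by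
    push_cast
    simp [ZMod.natCast_val, ZMod.cast_id]
    try ring, e2_int]
end AuxP
section AuxComm
variable (d : ℕ) [NeZero d]

lemma pull_e2 (f : ZMod (2*d) × ZMod (2*d) → ℂ) (φ : ZMod (2*d))
    (g : (ZMod (2*d) × ZMod (2*d)) → ZMod (2*d)) :
    e2 d φ * ((1/(2*(d:ℂ))) * ∑ y : ZMod (2*d) × ZMod (2*d), e2 d (g y) * f y)
      = (1/(2*(d:ℂ))) * ∑ y : ZMod (2*d) × ZMod (2*d), e2 d (φ + g y) * f y := by
  simp only [Finset.mul_sum]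
  apply Finset.sum_congr rfl
  intro y _
  rw [e2_add]
  ring

lemma P_SDFT_comm (f : ZMod (2*d) × ZMod (2*d) → ℂ) (m : ZMod (2*d) × ZMod (2*d)) :
    P d (SDFT d f) m = SDFT d (P d f) m := by
  have hL : P d (SDFT d f) m
      = (1/4 : ℂ) * ((1/(2*(d:ℂ))) * ∑ y : ZMod (2*d) × ZMod (2*d),
            e2 d (m.2 * y.1 - m.1 * y.2) * f y
        + ((1/(2*(d:ℂ))) * ∑ y : ZMod (2*d) × ZMod (2*d),
            e2 d (-(((d:ℕ):ZMod (2*d)) * m.2)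
              + ((m.1 + ((d:ℕ):ZMod (2*d)), m.2).2 * y.1
                - (m.1 + ((d:ℕ):ZMod (2*d)), m.2).1 * y.2)) * f y)
        + ((1/(2*(d:ℂ))) * ∑ y : ZMod (2*d) × ZMod (2*d),
            e2 d (-(((d:ℕ):ZMod (2*d)) * m.1)
              + ((m.1, m.2 + ((d:ℕ):ZMod (2*d))).2 * y.1
                - (m.1, m.2 + ((d:ℕ):ZMod (2*d))).1 * y.2)) * f y)
        + ((1/(2*(d:ℂ))) * ∑ y : ZMod (2*d) × ZMod (2*d),
            e2 d (-(((d:ℕ):ZMod (2*d)) * m.1 + ((d:ℕ):ZMod (2*d)) * m.2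
                + ((d:ℕ):ZMod (2*d)) * ((d:ℕ):ZMod (2*d)))
              + ((m.1 + ((d:ℕ):ZMod (2*d)), m.2 + ((d:ℕ):ZMod (2*d))).2 * y.1
                - (m.1 + ((d:ℕ):ZMod (2*d)), m.2 + ((d:ℕ):ZMod (2*d))).1 * y.2)) * f y)) := by
    rw [P_apply4 d (SDFT d f) m]
    rw [SDFT_eq d f m, SDFT_eq d f (m.1 + ((d:ℕ):ZMod (2*d)), m.2),
        SDFT_eq d f (m.1, m.2 + ((d:ℕ):ZMod (2*d))),
        SDFT_eq d f (m.1 + ((d:ℕ):ZMod (2*d)), m.2 + ((d:ℕ):ZMod (2*d)))]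
    rw [pull_e2, pull_e2, pull_e2]
  have hR : SDFT d (P d f) m
      = (1/4 : ℂ) * ((1/(2*(d:ℂ))) * ∑ y : ZMod (2*d) × ZMod (2*d),
            e2 d (m.2 * y.1 - m.1 * y.2) * f y
        + ((1/(2*(d:ℂ))) * ∑ y : ZMod (2*d) × ZMod (2*d),
            e2 d ((m.2 * (y.1 - ((d:ℕ):ZMod (2*d))) - m.1 * y.2)
              + -(((d:ℕ):ZMod (2*d)) * y.2)) * f y)
        + ((1/(2*(d:ℂ))) * ∑ y : ZMod (2*d) × ZMod (2*d),
            e2 d ((m.2 * y.1 - m.1 * (y.2 - ((d:ℕ):ZMod (2*d))))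
              + -(((d:ℕ):ZMod (2*d)) * y.1)) * f y)
        + ((1/(2*(d:ℂ))) * ∑ y : ZMod (2*d) × ZMod (2*d),
            e2 d ((m.2 * (y.1 - ((d:ℕ):ZMod (2*d))) - m.1 * (y.2 - ((d:ℕ):ZMod (2*d))))
              + -(((d:ℕ):ZMod (2*d)) * (y.1 - ((d:ℕ):ZMod (2*d)))
                + ((d:ℕ):ZMod (2*d)) * (y.2 - ((d:ℕ):ZMod (2*d)))
                + ((d:ℕ):ZMod (2*d)) * ((d:ℕ):ZMod (2*d)))) * f y)) := by
    rw [SDFT_eq d (P d f) m]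
    simp_rw [P_apply4 d f]
    have expand : ∀ y : ZMod (2*d) × ZMod (2*d),
        e2 d (m.2 * y.1 - m.1 * y.2) * ((1/4 : ℂ) * (f y
          + e2 d (-(((d:ℕ) : ZMod (2*d)) * y.2)) * f (y.1 + ((d:ℕ) : ZMod (2*d)), y.2)
          + e2 d (-(((d:ℕ) : ZMod (2*d)) * y.1)) * f (y.1, y.2 + ((d:ℕ) : ZMod (2*d)))
          + e2 d (-(((d:ℕ) : ZMod (2*d)) * y.1 + ((d:ℕ) : ZMod (2*d)) * y.2
              + ((d:ℕ) : ZMod (2*d)) * ((d:ℕ) : ZMod (2*d))))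
            * f (y.1 + ((d:ℕ) : ZMod (2*d)), y.2 + ((d:ℕ) : ZMod (2*d)))))
        = (1/4 : ℂ) * (e2 d (m.2 * y.1 - m.1 * y.2) * f y
          + e2 d ((m.2 * y.1 - m.1 * y.2) + -(((d:ℕ) : ZMod (2*d)) * y.2))
            * f (y.1 + ((d:ℕ) : ZMod (2*d)), y.2)
          + e2 d ((m.2 * y.1 - m.1 * y.2) + -(((d:ℕ) : ZMod (2*d)) * y.1))
            * f (y.1, y.2 + ((d:ℕ) : ZMod (2*d)))
          + e2 d ((m.2 * y.1 - m.1 * y.2) + -(((d:ℕ) : ZMod (2*d)) * y.1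
              + ((d:ℕ) : ZMod (2*d)) * y.2 + ((d:ℕ) : ZMod (2*d)) * ((d:ℕ) : ZMod (2*d))))
            * f (y.1 + ((d:ℕ) : ZMod (2*d)), y.2 + ((d:ℕ) : ZMod (2*d)))) := by
      intro y
      rw [e2_add, e2_add, e2_add]
      ring
    simp_rw [expand]
    rw [← Finset.mul_sum]
    simp only [Finset.sum_add_distrib]
    have r1 : (∑ y : ZMod (2*d) × ZMod (2*d),
          e2 d ((m.2 * y.1 - m.1 * y.2) + -(((d:ℕ) : ZMod (2*d)) * y.2))
            * f (y.1 + ((d:ℕ) : ZMod (2*d)), y.2))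
        = ∑ y : ZMod (2*d) × ZMod (2*d),
            e2 d ((m.2 * (y.1 - ((d:ℕ):ZMod (2*d))) - m.1 * y.2)
              + -(((d:ℕ):ZMod (2*d)) * y.2)) * f y := by
      apply Fintype.sum_equiv
        (Equiv.addRight (((((d:ℕ):ZMod (2*d))), (0:ZMod (2*d))) : ZMod (2*d) × ZMod (2*d)))
      intro y
      simp only [Equiv.coe_addRight, Prod.fst_add, Prod.snd_add, add_zero]
      rw [show (y + (((((d:ℕ):ZMod (2*d))), (0:ZMod (2*d))) : ZMod (2*d) × ZMod (2*d)))
          = (y.1 + ((d:ℕ):ZMod (2*d)), y.2) from by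
        rw [Prod.ext_iff]; constructor <;> simp]
      congr 2
      ring
    have r2 : (∑ y : ZMod (2*d) × ZMod (2*d),
          e2 d ((m.2 * y.1 - m.1 * y.2) + -(((d:ℕ) : ZMod (2*d)) * y.1))
            * f (y.1, y.2 + ((d:ℕ) : ZMod (2*d))))
        = ∑ y : ZMod (2*d) × ZMod (2*d),
            e2 d ((m.2 * y.1 - m.1 * (y.2 - ((d:ℕ):ZMod (2*d))))
              + -(((d:ℕ):ZMod (2*d)) * y.1)) * f y := by
      apply Fintype.sum_equiv
        (Equiv.addRight (((0:ZMod (2*d)), (((d:ℕ):ZMod (2*d)))) : ZMod (2*d) × ZMod (2*d)))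
      intro y
      simp only [Equiv.coe_addRight]
      rw [show (y + (((0:ZMod (2*d)), (((d:ℕ):ZMod (2*d)))) : ZMod (2*d) × ZMod (2*d)))
          = (y.1, y.2 + ((d:ℕ):ZMod (2*d))) from by
        rw [Prod.ext_iff]; constructor <;> simp]
      congr 2
      ring
    have r3 : (∑ y : ZMod (2*d) × ZMod (2*d),
          e2 d ((m.2 * y.1 - m.1 * y.2) + -(((d:ℕ) : ZMod (2*d)) * y.1
              + ((d:ℕ) : ZMod (2*d)) * y.2 + ((d:ℕ) : ZMod (2*d)) * ((d:ℕ) : ZMod (2*d))))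
            * f (y.1 + ((d:ℕ) : ZMod (2*d)), y.2 + ((d:ℕ) : ZMod (2*d))))
        = ∑ y : ZMod (2*d) × ZMod (2*d),
            e2 d ((m.2 * (y.1 - ((d:ℕ):ZMod (2*d))) - m.1 * (y.2 - ((d:ℕ):ZMod (2*d))))
              + -(((d:ℕ):ZMod (2*d)) * (y.1 - ((d:ℕ):ZMod (2*d)))
                + ((d:ℕ):ZMod (2*d)) * (y.2 - ((d:ℕ):ZMod (2*d)))
                + ((d:ℕ):ZMod (2*d)) * ((d:ℕ):ZMod (2*d)))) * f y := by
      apply Fintype.sum_equiv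
        (Equiv.addRight (((((d:ℕ):ZMod (2*d))), (((d:ℕ):ZMod (2*d)))) : ZMod (2*d) × ZMod (2*d)))
      intro y
      simp only [Equiv.coe_addRight]
      rw [show (y + (((((d:ℕ):ZMod (2*d))), (((d:ℕ):ZMod (2*d)))) : ZMod (2*d) × ZMod (2*d)))
          = (y.1 + ((d:ℕ):ZMod (2*d)), y.2 + ((d:ℕ):ZMod (2*d))) from by
        rw [Prod.ext_iff]; constructor <;> simp]
      congr 2
      ring
    rw [r1, r2, r3]
    ring
  rw [hL, hR]
  have key2 : (∑ y : ZMod (2*d) × ZMod (2*d),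
        e2 d (-(((d:ℕ):ZMod (2*d)) * m.1)
          + ((m.1, m.2 + ((d:ℕ):ZMod (2*d))).2 * y.1
            - (m.1, m.2 + ((d:ℕ):ZMod (2*d))).1 * y.2)) * f y)
      = ∑ y : ZMod (2*d) × ZMod (2*d),
          e2 d ((m.2 * y.1 - m.1 * (y.2 - ((d:ℕ):ZMod (2*d))))
            + -(((d:ℕ):ZMod (2*d)) * y.1)) * f y := by
    apply Finset.sum_congr rfl
    intro y _
    congr 2
    linear_combination (y.1 - m.1) * twoD d
  have key1 : (∑ y : ZMod (2*d) × ZMod (2*d),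
        e2 d (-(((d:ℕ):ZMod (2*d)) * m.2)
          + ((m.1 + ((d:ℕ):ZMod (2*d)), m.2).2 * y.1
            - (m.1 + ((d:ℕ):ZMod (2*d)), m.2).1 * y.2)) * f y)
      = ∑ y : ZMod (2*d) × ZMod (2*d),
          e2 d ((m.2 * (y.1 - ((d:ℕ):ZMod (2*d))) - m.1 * y.2)
            + -(((d:ℕ):ZMod (2*d)) * y.2)) * f y := by
    apply Finset.sum_congr rfl
    intro y _
    congr 2
    ring
  have key3 : (∑ y : ZMod (2*d) × ZMod (2*d),
        e2 d (-(((d:ℕ):ZMod (2*d)) * m.1 + ((d:ℕ):ZMod (2*d)) * m.2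
            + ((d:ℕ):ZMod (2*d)) * ((d:ℕ):ZMod (2*d)))
          + ((m.1 + ((d:ℕ):ZMod (2*d)), m.2 + ((d:ℕ):ZMod (2*d))).2 * y.1
            - (m.1 + ((d:ℕ):ZMod (2*d)), m.2 + ((d:ℕ):ZMod (2*d))).1 * y.2)) * f y)
      = ∑ y : ZMod (2*d) × ZMod (2*d),
          e2 d ((m.2 * (y.1 - ((d:ℕ):ZMod (2*d))) - m.1 * (y.2 - ((d:ℕ):ZMod (2*d))))
            + -(((d:ℕ):ZMod (2*d)) * (y.1 - ((d:ℕ):ZMod (2*d)))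
              + ((d:ℕ):ZMod (2*d)) * (y.2 - ((d:ℕ):ZMod (2*d)))
              + ((d:ℕ):ZMod (2*d)) * ((d:ℕ):ZMod (2*d)))) * f y := by
    apply Finset.sum_congr rfl
    intro y _
    congr 2
    linear_combination (y.1 - m.1 - ((d:ℕ):ZMod (2*d))) * twoD d
  rw [key1, key2, key3]
end AuxComm
section AuxFourier
variable (d : ℕ) [NeZero d]

lemma sum_e2_pair' (c1 c2 : ZMod (2*d)) :
    ∑ k : ZMod (2*d) × ZMod (2*d), e2 d (c1 * k.2 - c2 * k.1)
      = if c1 = 0 ∧ c2 = 0 then (2 * (d:ℂ))^2 else 0 := by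
  simpa [Prod.mk_eq_zero] using sum_e2_pair d (c1, c2)

lemma SDFT_SDFT (f : ZMod (2*d) × ZMod (2*d) → ℂ) (m : ZMod (2*d) × ZMod (2*d)) :
    SDFT d (SDFT d f) m = f m := by
  have h2d := h2dC d
  rw [SDFT_eq d (SDFT d f) m]
  simp_rw [SDFT_eq d f]
  have hterm : ∀ x y : ZMod (2*d) × ZMod (2*d),
      e2 d (m.2 * x.1 - m.1 * x.2) * ((1/(2*(d:ℂ))) * (e2 d (x.2 * y.1 - x.1 * y.2) * f y))
        = (1/(2*(d:ℂ))) * (e2 d ((y.1 - m.1) * x.2 - (y.2 - m.2) * x.1) * f y) := by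
    intro x y
    rw [show (y.1 - m.1) * x.2 - (y.2 - m.2) * x.1
        = (m.2 * x.1 - m.1 * x.2) + (x.2 * y.1 - x.1 * y.2) from by ring, e2_add]
    ring
  simp_rw [Finset.mul_sum]
  rw [Finset.sum_comm]
  simp_rw [hterm]
  simp_rw [← Finset.mul_sum]
  simp_rw [← Finset.sum_mul]
  simp_rw [sum_e2_pair']
  simp_rw [sub_eq_zero, ← Prod.ext_iff]
  simp_rw [ite_mul, zero_mul]
  rw [Finset.sum_ite_eq' Finset.univ m (fun y => (2 * (d:ℂ))^2 * f y)]
  simp only [Finset.mem_univ, if_true]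
  field_simp
  simp [(Nat.cast_ne_zero.mpr (NeZero.ne d) : (d:ℂ) ≠ 0)]

end AuxFourier
section AuxCross
variable (d : ℕ) [NeZero d]

lemma conj_SDFT (f : ZMod (2*d) × ZMod (2*d) → ℂ) (k : ZMod (2*d) × ZMod (2*d)) :
    (starRingEnd ℂ) (SDFT d f k)
      = (1/(2*(d:ℂ))) * ∑ a : ZMod (2*d) × ZMod (2*d),
          e2 d (-(k.2 * a.1 - k.1 * a.2)) * (starRingEnd ℂ) (f a) := by
  rw [SDFT_eq, _root_.map_mul, map_sum]
  congr 1
  · simp [map_div₀, map_ofNat]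
  · apply Finset.sum_congr rfl
    intro a _
    rw [_root_.map_mul, e2_conj]

lemma SDFT_conj (f : ZMod (2*d) × ZMod (2*d) → ℂ) (m : ZMod (2*d) × ZMod (2*d)) :
    (starRingEnd ℂ) (SDFT d f m) = SDFT d (fun x => (starRingEnd ℂ) (f x)) (-m) := by
  rw [conj_SDFT, SDFT_eq]
  congr 1
  apply Finset.sum_congr rfl
  intro a _
  congr 2
  simp only [Prod.fst_neg, Prod.snd_neg]
  ring

lemma crossCor_eq (f : ZMod (2*d) × ZMod (2*d) → ℂ) (m : ZMod (2*d) × ZMod (2*d)) :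
    crossCor d f f m = ∑ k : ZMod (2*d) × ZMod (2*d),
      e2 d (m.2 * k.1 - m.1 * k.2) * ((starRingEnd ℂ) (SDFT d f k) * SDFT d f k) := by
  have h2d := h2dC d
  symm
  calc ∑ k : ZMod (2*d) × ZMod (2*d),
        e2 d (m.2 * k.1 - m.1 * k.2) * ((starRingEnd ℂ) (SDFT d f k) * SDFT d f k)
      = ∑ k : ZMod (2*d) × ZMod (2*d), ∑ a : ZMod (2*d) × ZMod (2*d),
          ∑ b : ZMod (2*d) × ZMod (2*d),
          (1/(2*(d:ℂ)))^2 * (e2 d ((b.1 - a.1 - m.1) * k.2 - (b.2 - a.2 - m.2) * k.1)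
            * ((starRingEnd ℂ) (f a) * f b)) := by
        apply Finset.sum_congr rfl
        intro k _
        rw [conj_SDFT d f k, SDFT_eq d f k, mul_mul_mul_comm, Finset.sum_mul_sum]
        simp only [Finset.mul_sum]
        apply Finset.sum_congr rfl
        intro a _
        apply Finset.sum_congr rfl
        intro b _
        rw [show (b.1 - a.1 - m.1) * k.2 - (b.2 - a.2 - m.2) * k.1
            = (m.2 * k.1 - m.1 * k.2) + ((-(k.2 * a.1 - k.1 * a.2)) + (k.2 * b.1 - k.1 * b.2))
          from by ring, e2_add, e2_add]
        ring
    _ = ∑ a : ZMod (2*d) × ZMod (2*d), ∑ b : ZMod (2*d) × ZMod (2*d),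
          ∑ k : ZMod (2*d) × ZMod (2*d),
          (1/(2*(d:ℂ)))^2 * (e2 d ((b.1 - a.1 - m.1) * k.2 - (b.2 - a.2 - m.2) * k.1)
            * ((starRingEnd ℂ) (f a) * f b)) := by
        rw [Finset.sum_comm]
        apply Finset.sum_congr rfl
        intro a _
        rw [Finset.sum_comm]
    _ = ∑ a : ZMod (2*d) × ZMod (2*d), ∑ b : ZMod (2*d) × ZMod (2*d),
          (1/(2*(d:ℂ)))^2 * ((if b = a + m then (2*(d:ℂ))^2 else 0)
            * ((starRingEnd ℂ) (f a) * f b)) := by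
        apply Finset.sum_congr rfl
        intro a _
        apply Finset.sum_congr rfl
        intro b _
        rw [← Finset.mul_sum, ← Finset.sum_mul, sum_e2_pair']
        have hiff : ((b.1 - a.1 - m.1 = 0) ∧ (b.2 - a.2 - m.2 = 0)) ↔ b = a + m := by
          rw [Prod.ext_iff]
          constructor
          · rintro ⟨h1, h2⟩
            constructor
            · simp only [Prod.fst_add]; linear_combination h1
            · simp only [Prod.snd_add]; linear_combination h2
          · rintro ⟨h1, h2⟩
            simp only [Prod.fst_add] at h1
            simp only [Prod.snd_add] at h2
            constructor
            · linear_combination h1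
            · linear_combination h2
        rw [if_congr hiff rfl rfl]
    _ = ∑ a : ZMod (2*d) × ZMod (2*d), (starRingEnd ℂ) (f a) * f (a + m) := by
        apply Finset.sum_congr rfl
        intro a _
        have : ∀ b : ZMod (2*d) × ZMod (2*d),
            (1/(2*(d:ℂ)))^2 * ((if b = a + m then (2*(d:ℂ))^2 else 0)
              * ((starRingEnd ℂ) (f a) * f b))
            = if b = a + m then (1/(2*(d:ℂ)))^2 * ((2*(d:ℂ))^2
                * ((starRingEnd ℂ) (f a) * f b)) else 0 := by
          intro b
          by_cases hb : b = a + m <;> simp [hb]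
        simp_rw [this]
        rw [Finset.sum_ite_eq' Finset.univ (a + m)
          (fun b => (1/(2*(d:ℂ)))^2 * ((2*(d:ℂ))^2 * ((starRingEnd ℂ) (f a) * f b)))]
        simp only [Finset.mem_univ, if_true]
        field_simp
        rw [mul_assoc, mul_div_cancel_left₀ _ (Nat.cast_ne_zero.mpr (NeZero.ne d) : (d:ℂ) ≠ 0)]
    _ = crossCor d f f m := by rw [crossCor]
end AuxCross
section AuxM3
variable (d : ℕ) [NeZero d]

lemma dbl_zero : dbl d 0 = 0 := by simp [dbl, ZMod.val_zero]

lemma sum_dbl_pair (u v : ZMod (2*d)) :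
    ∑ α : ZMod d × ZMod d, e2 d (dbl d α.1 * u + dbl d α.2 * v)
      = (if (u = 0 ∨ u = ((d:ℕ) : ZMod (2*d))) then (d:ℂ) else 0)
        * (if (v = 0 ∨ v = ((d:ℕ) : ZMod (2*d))) then (d:ℂ) else 0) := by
  rw [Fintype.sum_prod_type]
  simp_rw [e2_add]
  rw [← Finset.sum_mul_sum]
  rw [sum_e2_dbl, sum_e2_dbl]

/-- the cross-correlation of a projected stencil, in terms of `g k`. -/
lemma crossCor_P (M : ZMod (2*d) × ZMod (2*d) → ℂ) (x : ZMod (2*d) × ZMod (2*d)) :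
    crossCor d (P d M) (P d M) x
      = ∑ k : ZMod (2*d) × ZMod (2*d), e2 d (x.2 * k.1 - x.1 * k.2)
          * ((starRingEnd ℂ) (SDFT d (P d M) k) * SDFT d (P d M) k) :=
  crossCor_eq d (P d M) x

lemma M3'_to_M3 (M : ZMod (2*d) × ZMod (2*d) → ℂ)
    (h3 : ∀ k, (starRingEnd ℂ) (SDFT d (P d M) k) * SDFT d (P d M) k
      = (1/(2*(d:ℂ)))^2) :
    ∀ α : ZMod d × ZMod d,
      crossCor d (P d M) (P d M) (dbl2 d α) = if α = 0 then 1 else 0 := by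
  intro α
  have h2d := h2dC d
  rw [crossCor_P d M (dbl2 d α)]
  simp_rw [h3]
  rw [← Finset.sum_mul]
  have harg : ∀ k : ZMod (2*d) × ZMod (2*d),
      e2 d ((dbl2 d α).2 * k.1 - (dbl2 d α).1 * k.2)
        = e2 d ((-(dbl d α.1)) * k.2 - (-(dbl d α.2)) * k.1) := by
    intro k
    have e1 : (dbl2 d α).1 = dbl d α.1 := rfl
    have e2' : (dbl2 d α).2 = dbl d α.2 := rfl
    rw [e1, e2']
    congr 1
    ring
  simp_rw [harg]
  rw [sum_e2_pair']
  have hcond : ((-(dbl d α.1) = 0) ∧ (-(dbl d α.2) = 0)) ↔ α = 0 := by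
    simp [neg_eq_zero, dbl_eq_zero_iff, Prod.ext_iff]
  rw [if_congr hcond rfl rfl]
  by_cases hα : α = 0
  · rw [if_pos hα, if_pos hα]
    field_simp
    exact div_self (Nat.cast_ne_zero.mpr (NeZero.ne d) : (d:ℂ) ≠ 0)
  · rw [if_neg hα, if_neg hα, zero_mul]

lemma M3_to_M3' (M : ZMod (2*d) × ZMod (2*d) → ℂ)
    (h3 : ∀ α : ZMod d × ZMod d,
      crossCor d (P d M) (P d M) (dbl2 d α) = if α = 0 then 1 else 0) :
    ∀ k, (starRingEnd ℂ) (SDFT d (P d M) k) * SDFT d (P d M) k = (1/(2*(d:ℂ)))^2 := by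
  intro k'
  have h2d := h2dC d
  have hdC : (d:ℂ) ≠ 0 := Nat.cast_ne_zero.mpr (NeZero.ne d)
  set N := SDFT d (P d M) with hN
  set g : ZMod (2*d) × ZMod (2*d) → ℂ := fun k => (starRingEnd ℂ) (N k) * N k with hg
  -- the weighted sum over α
  have way1 : (∑ α : ZMod d × ZMod d,
        e2 d ((dbl2 d α).1 * k'.2 - (dbl2 d α).2 * k'.1)
          * crossCor d (P d M) (P d M) (dbl2 d α)) = 1 := by
    simp_rw [h3]
    simp_rw [mul_ite, mul_one, mul_zero]
    rw [Finset.sum_ite_eq' Finset.univ (0 : ZMod d × ZMod d)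
      (fun α => e2 d ((dbl2 d α).1 * k'.2 - (dbl2 d α).2 * k'.1))]
    simp only [Finset.mem_univ, if_true]
    have : (dbl2 d (0 : ZMod d × ZMod d)).1 = 0 := by
      show dbl d 0 = 0
      exact dbl_zero d
    have h2' : (dbl2 d (0 : ZMod d × ZMod d)).2 = 0 := by
      show dbl d 0 = 0
      exact dbl_zero d
    rw [this, h2']
    rw [show (0 : ZMod (2*d)) * k'.2 - (0 : ZMod (2*d)) * k'.1 = 0 from by ring, e2_zero]
  have way2 : (∑ α : ZMod d × ZMod d,
        e2 d ((dbl2 d α).1 * k'.2 - (dbl2 d α).2 * k'.1)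
          * crossCor d (P d M) (P d M) (dbl2 d α))
      = (d:ℂ)^2 * (g k' + g (k'.1 + ((d:ℕ):ZMod (2*d)), k'.2)
          + g (k'.1, k'.2 + ((d:ℕ):ZMod (2*d)))
          + g (k'.1 + ((d:ℕ):ZMod (2*d)), k'.2 + ((d:ℕ):ZMod (2*d)))) := by
    simp_rw [crossCor_P d M]
    simp_rw [Finset.mul_sum]
    have comb : ∀ (α : ZMod d × ZMod d) (k : ZMod (2*d) × ZMod (2*d)),
        e2 d ((dbl2 d α).1 * k'.2 - (dbl2 d α).2 * k'.1)
          * (e2 d ((dbl2 d α).2 * k.1 - (dbl2 d α).1 * k.2) * g k)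
        = e2 d (dbl d α.1 * (k'.2 - k.2) + dbl d α.2 * (k.1 - k'.1)) * g k := by
      intro α k
      have e1 : (dbl2 d α).1 = dbl d α.1 := rfl
      have e2' : (dbl2 d α).2 = dbl d α.2 := rfl
      rw [e1, e2']
      rw [show dbl d α.1 * (k'.2 - k.2) + dbl d α.2 * (k.1 - k'.1)
          = (dbl d α.1 * k'.2 - dbl d α.2 * k'.1) + (dbl d α.2 * k.1 - dbl d α.1 * k.2)
        from by ring, e2_add]
      ring
    have hgk : ∀ k, (starRingEnd ℂ) (SDFT d (P d M) k) * SDFT d (P d M) k = g k := fun k => rfl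
    simp_rw [hgk, comb]
    rw [Finset.sum_comm]
    have inner : ∀ k : ZMod (2*d) × ZMod (2*d),
        (∑ α : ZMod d × ZMod d, e2 d (dbl d α.1 * (k'.2 - k.2) + dbl d α.2 * (k.1 - k'.1)) * g k)
        = (d:ℂ)^2 * (if cond4 d k k' then g k else 0) := by
      intro k
      rw [← Finset.sum_mul, sum_dbl_pair]
      have cA : ((k'.2 - k.2 = 0) ∨ (k'.2 - k.2 = ((d:ℕ):ZMod (2*d))))
          ↔ (k.2 = k'.2 ∨ k.2 = k'.2 + ((d:ℕ):ZMod (2*d))) := by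
        constructor
        · rintro (h | h)
          · left; linear_combination -h
          · right; linear_combination -h - twoD d
        · rintro (h | h)
          · left; linear_combination -h
          · right; linear_combination -h - twoD d
      have cB : ((k.1 - k'.1 = 0) ∨ (k.1 - k'.1 = ((d:ℕ):ZMod (2*d))))
          ↔ (k.1 = k'.1 ∨ k.1 = k'.1 + ((d:ℕ):ZMod (2*d))) := by
        constructor
        · rintro (h | h)
          · left; linear_combination h
          · right; linear_combination h
        · rintro (h | h)
          · left; linear_combination h
          · right; linear_combination h
      rw [if_congr cA rfl rfl, if_congr cB rfl rfl]
      by_cases hA : (k.2 = k'.2 ∨ k.2 = k'.2 + ((d:ℕ):ZMod (2*d))) <;>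
        by_cases hB : (k.1 = k'.1 ∨ k.1 = k'.1 + ((d:ℕ):ZMod (2*d)))
      · rw [if_pos hA, if_pos hB, if_pos ⟨hB, hA⟩]
        ring
      · rw [if_pos hA, if_neg hB, if_neg (fun hc => hB hc.1)]
        ring
      · rw [if_neg hA, if_pos hB, if_neg (fun hc => hA hc.2)]
        ring
      · rw [if_neg hA, if_neg hB, if_neg (fun hc => hA hc.2)]
        ring
    simp_rw [inner]
    rw [← Finset.mul_sum]
    rw [sum_cond4 d g k']
  -- periodicity of g
  have hshift1 : ∀ x : ZMod (2*d) × ZMod (2*d),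
      g (x.1 + ((d:ℕ):ZMod (2*d)), x.2) = g x := by
    intro x
    have h := P_SDFT_comm d M
    have hNx : ∀ y, N y = P d (SDFT d M) y := fun y => (h y).symm
    have hs := P_shift1 d (SDFT d M) x
    rw [hg]
    simp only []
    rw [hNx (x.1 + ((d:ℕ):ZMod (2*d)), x.2), hNx x, hs, _root_.map_mul]
    rw [show ((starRingEnd ℂ) (e2 d (((d:ℕ):ZMod (2*d)) * x.2))
          * (starRingEnd ℂ) (P d (SDFT d M) x))
        * (e2 d (((d:ℕ):ZMod (2*d)) * x.2) * P d (SDFT d M) x)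
      = ((starRingEnd ℂ) (e2 d (((d:ℕ):ZMod (2*d)) * x.2))
          * e2 d (((d:ℕ):ZMod (2*d)) * x.2))
        * ((starRingEnd ℂ) (P d (SDFT d M) x) * P d (SDFT d M) x) from by ring]
    rw [e2_mul_conj, one_mul]
  have hshift2 : ∀ x : ZMod (2*d) × ZMod (2*d),
      g (x.1, x.2 + ((d:ℕ):ZMod (2*d))) = g x := by
    intro x
    have h := P_SDFT_comm d M
    have hNx : ∀ y, N y = P d (SDFT d M) y := fun y => (h y).symm
    have hs := P_shift2 d (SDFT d M) x
    rw [hg]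
    simp only []
    rw [hNx (x.1, x.2 + ((d:ℕ):ZMod (2*d))), hNx x, hs, _root_.map_mul]
    rw [show ((starRingEnd ℂ) (e2 d (((d:ℕ):ZMod (2*d)) * x.1))
          * (starRingEnd ℂ) (P d (SDFT d M) x))
        * (e2 d (((d:ℕ):ZMod (2*d)) * x.1) * P d (SDFT d M) x)
      = ((starRingEnd ℂ) (e2 d (((d:ℕ):ZMod (2*d)) * x.1))
          * e2 d (((d:ℕ):ZMod (2*d)) * x.1))
        * ((starRingEnd ℂ) (P d (SDFT d M) x) * P d (SDFT d M) x) from by ring]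
    rw [e2_mul_conj, one_mul]
  have hdd : g (k'.1 + ((d:ℕ):ZMod (2*d)), k'.2 + ((d:ℕ):ZMod (2*d))) = g k' := by
    have h1 := hshift1 (k'.1, k'.2 + ((d:ℕ):ZMod (2*d)))
    have h2 := hshift2 k'
    rw [show ((k'.1, k'.2 + ((d:ℕ):ZMod (2*d))) : ZMod (2*d) × ZMod (2*d)).1
        = k'.1 from rfl] at h1
    rw [show ((k'.1, k'.2 + ((d:ℕ):ZMod (2*d))) : ZMod (2*d) × ZMod (2*d)).2
        = k'.2 + ((d:ℕ):ZMod (2*d)) from rfl] at h1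
    rw [h1, h2]
  have key : (d:ℂ)^2 * (4 * g k') = 1 := by
    rw [← way1, way2, hshift1 k', hshift2 k', hdd]
    ring
  have : g k' = (1/(2*(d:ℂ)))^2 := by
    field_simp
    field_simp at key
    linear_combination key
  exact this
end AuxM3
theorem stmt11 (d : ℕ) [NeZero d] (M : ZMod (2 * d) × ZMod (2 * d) → ℂ) :
    IsValidStencil d M ↔
      ((∀ m, (starRingEnd ℂ) (P d (SDFT d M) m) = P d (SDFT d M) (-m)) ∧
       P d (SDFT d M) 0 = 1 / (2 * (d : ℂ)) ∧
       (∀ m, ‖P d (SDFT d M) m‖ = 1 / (2 * (d : ℝ)))) := by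
  have h2d := h2dC d
  have hdC : (d:ℂ) ≠ 0 := Nat.cast_ne_zero.mpr (NeZero.ne d)
  have hdR : (0:ℝ) < (d:ℝ) := by
    exact_mod_cast Nat.pos_of_ne_zero (NeZero.ne d)
  have hcomm : ∀ m, P d (SDFT d M) m = SDFT d (P d M) m := P_SDFT_comm d M
  have hN0 : P d (SDFT d M) 0
      = (1/(2*(d:ℂ))) * ∑ x : ZMod (2*d) × ZMod (2*d), P d M x := by
    rw [hcomm 0, SDFT_eq]
    congr 1
    apply Finset.sum_congr rfl
    intro x _
    rw [show ((0 : ZMod (2*d) × ZMod (2*d)).2 * x.1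
        - (0 : ZMod (2*d) × ZMod (2*d)).1 * x.2) = 0 from by
      simp, e2_zero, one_mul]
  constructor
  · intro h
    obtain ⟨h1, h2, h3⟩ := h
    refine ⟨?_, ?_, ?_⟩
    · intro m
      rw [hcomm m, hcomm (-m), SDFT_conj d (P d M) m,
        show (fun x => (starRingEnd ℂ) (P d M x)) = P d M from funext h1]
    · rw [hN0, h2, mul_one]
    · intro m
      have hg := M3_to_M3' d M h3
      have hnorm : (Complex.normSq (SDFT d (P d M) m) : ℂ) = (1/(2*(d:ℂ)))^2 := by
        rw [← Complex.mul_conj, mul_comm]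
        exact hg m
      have hnormR : Complex.normSq (SDFT d (P d M) m) = (1/(2*(d:ℝ)))^2 := by
        have hc : ((1/(2*(d:ℂ)))^2) = (((1/(2*(d:ℝ)))^2 : ℝ) : ℂ) := by push_cast; ring
        rw [hc] at hnorm
        exact_mod_cast hnorm
      have habs2 : (‖SDFT d (P d M) m‖)^2 = (1/(2*(d:ℝ)))^2 := by
        rw [Complex.sq_norm]
        exact hnormR
      have h0 : 0 ≤ ‖SDFT d (P d M) m‖ := norm_nonneg _
      have hpos : (0:ℝ) < 1/(2*(d:ℝ)) := by positivity
      have hfact : (‖SDFT d (P d M) m‖ - 1/(2*(d:ℝ)))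
          * (‖SDFT d (P d M) m‖ + 1/(2*(d:ℝ))) = 0 := by
        linear_combination habs2
      rw [hcomm m]
      rcases mul_eq_zero.mp hfact with hc | hc
      · linarith
      · linarith
  · intro h
    obtain ⟨h1, h2, h3⟩ := h
    have hg : ∀ k, (starRingEnd ℂ) (SDFT d (P d M) k) * SDFT d (P d M) k
        = (1/(2*(d:ℂ)))^2 := by
      intro k
      rw [← hcomm k]
      calc (starRingEnd ℂ) (P d (SDFT d M) k) * P d (SDFT d M) k
          = (Complex.normSq (P d (SDFT d M) k) : ℂ) := by
            rw [mul_comm, Complex.mul_conj]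
        _ = (((‖P d (SDFT d M) k‖)^2 : ℝ) : ℂ) := by
            rw [Complex.sq_norm]
        _ = (((1/(2*(d:ℝ)))^2 : ℝ) : ℂ) := by rw [h3 k]
        _ = (1/(2*(d:ℂ)))^2 := by push_cast; ring
    refine ⟨?_, ?_, ?_⟩
    · -- M1
      have hfun : ∀ m, SDFT d (fun x => (starRingEnd ℂ) (P d M x)) m = SDFT d (P d M) m := by
        intro m
        have hstep : SDFT d (fun x => (starRingEnd ℂ) (P d M x)) m
            = (starRingEnd ℂ) (SDFT d (P d M) (-m)) := by
          rw [SDFT_conj d (P d M) (-m), neg_neg]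
        rw [hstep, ← hcomm (-m)]
        have := h1 (-m)
        rw [neg_neg] at this
        rw [this, hcomm m]
      intro m
      have hinv := SDFT_SDFT d (fun x => (starRingEnd ℂ) (P d M x)) m
      rw [show SDFT d (fun x => (starRingEnd ℂ) (P d M x)) = SDFT d (P d M) from
        funext hfun] at hinv
      rw [SDFT_SDFT d (P d M) m] at hinv
      exact hinv.symm
    · -- M2
      rw [hN0] at h2
      field_simp at h2
      exact h2
    · -- M3
      exact M3'_to_M3 d M hg
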